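/- Let (E, Λ, p) and (F, Λ, q) be locally Hilbert space models over the same directed index set Λ. Let N₁, N₁' ∈ 𝓛(E) satisfy ⟨N₁ x, y⟩ = ⟨x, N₁' y⟩ for all x, y ∈ E and N₁ ∘ N₁' = N₁' ∘ N₁ (i.e. N₁ is locally normal with adjoint N₁'), and let N₂, N₂' ∈ 𝓛(F) satisfy ⟨N₂ x, y⟩ = ⟨x, N₂' y⟩ for all x, y ∈ F and N₂ ∘ N₂' = N₂' ∘ N₂. If S ∈ 𝓛(E, F) satisfies S ∘ N₁ = N₂ ∘ S, then S ∘ N₁' = N₂' ∘ S. -/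

import Mathlib

open scoped InnerProductSpace

/-- The orthogonal projection of an inner product space onto a complete submodule,
viewed as a continuous linear map of the ambient space into itself. -/
noncomputable def projL {E : Type*} [NormedAddCommGroup E] [InnerProductSpace ℂ E]
    (K : Submodule ℂ E) [CompleteSpace K] : E →L[ℂ] E :=
  K.subtypeL.comp K.orthogonalProjection

/-- An element of `𝓛(E, F)` for two locally Hilbert space models `(E, Λ, p)` and `(F, Λ, q)`
over the same index set: a linear map `E → F` mapping each `p l` into `q l`, whose
restrictions `p l → q l` are continuous (bounded) operators, and which intertwines the
orthogonal projections `projL (p l)` and `projL (q l)`. -/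
structure LocOpPair {E F : Type*} [NormedAddCommGroup E] [InnerProductSpace ℂ E]
    [NormedAddCommGroup F] [InnerProductSpace ℂ F]
    {Λ : Type*} (p : Λ → Submodule ℂ E) (q : Λ → Submodule ℂ F)
    [∀ l, CompleteSpace (p l)] [∀ l, CompleteSpace (q l)] where
  toFun : E →ₗ[ℂ] F
  restr : ∀ l, p l →L[ℂ] q l
  restr_eq : ∀ l (x : p l), (restr l x : F) = toFun x
  proj_comm : ∀ l (x : E), toFun (projL (p l) x) = projL (q l) (toFun x)

/-- An element of `𝓛(E)`: the case `p = q` of `LocOpPair`. -/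
abbrev LocOp {E : Type*} [NormedAddCommGroup E] [InnerProductSpace ℂ E]
    {Λ : Type*} (p : Λ → Submodule ℂ E) [∀ l, CompleteSpace (p l)] :=
  LocOpPair p p

/-!
Each `p l` is a Hilbert space on which `N₁`, `N₁'` restrict to bounded operators, `N₁'` being the
Hilbert-space adjoint of the normal operator `N₁`; likewise for `N₂`, `N₂'` on `q l`, and `S`
restricts to an operator `p l → q l` intertwining `N₁` and `N₂`. The Fuglede–Putnam theorem on
these Hilbert spaces gives `S N₁' = N₂' S` on `p l`, and the `p l` cover `E`.

Fuglede–Putnam between two Hilbert spaces `H₁`, `H₂` follows from the C⋆-algebra version in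
`B(H₁ ⊕ H₂)` (Berberian's trick): `S` intertwines `A` and `B` iff `[[0, 0], [S, 0]]` commutes
with the normal operator `[[A, 0], [0, B]]`.
-/

open ContinuousLinearMap

section BlockOperators

variable {H₁ H₂ : Type*}
  [NormedAddCommGroup H₁] [InnerProductSpace ℂ H₁]
  [NormedAddCommGroup H₂] [InnerProductSpace ℂ H₂]

noncomputable def diagL2 (A : H₁ →L[ℂ] H₁) (B : H₂ →L[ℂ] H₂) :
    WithLp 2 (H₁ × H₂) →L[ℂ] WithLp 2 (H₁ × H₂) :=
  (WithLp.prodContinuousLinearEquiv 2 ℂ H₁ H₂).symm ∘L A.prodMap B ∘L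
    WithLp.prodContinuousLinearEquiv 2 ℂ H₁ H₂

noncomputable def lowerL2 (S : H₁ →L[ℂ] H₂) :
    WithLp 2 (H₁ × H₂) →L[ℂ] WithLp 2 (H₁ × H₂) :=
  (WithLp.prodContinuousLinearEquiv 2 ℂ H₁ H₂).symm ∘L inr ℂ H₁ H₂ ∘L S ∘L
    WithLp.fstL 2 ℂ H₁ H₂

@[simp]
lemma diagL2_apply (A : H₁ →L[ℂ] H₁) (B : H₂ →L[ℂ] H₂) (x : WithLp 2 (H₁ × H₂)) :
    diagL2 A B x = WithLp.toLp 2 (A x.fst, B x.snd) :=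
  rfl

@[simp]
lemma lowerL2_apply (S : H₁ →L[ℂ] H₂) (x : WithLp 2 (H₁ × H₂)) :
    lowerL2 S x = WithLp.toLp 2 (0, S x.fst) :=
  rfl

lemma diagL2_mul (A A' : H₁ →L[ℂ] H₁) (B B' : H₂ →L[ℂ] H₂) :
    diagL2 A B * diagL2 A' B' = diagL2 (A * A') (B * B') :=
  rfl

lemma lowerL2_mul_diagL2 (S : H₁ →L[ℂ] H₂) (A : H₁ →L[ℂ] H₁) (B : H₂ →L[ℂ] H₂) :
    lowerL2 S * diagL2 A B = lowerL2 (S ∘L A) :=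
  rfl

lemma diagL2_mul_lowerL2 (S : H₁ →L[ℂ] H₂) (A : H₁ →L[ℂ] H₁) (B : H₂ →L[ℂ] H₂) :
    diagL2 A B * lowerL2 S = lowerL2 (B ∘L S) := by
  ext x
  all_goals simp

lemma lowerL2_injective : Function.Injective (lowerL2 : (H₁ →L[ℂ] H₂) → _) := by
  intro S T h
  ext u
  simpa using congr(($h (WithLp.toLp 2 (u, 0))).snd)

variable [CompleteSpace H₁] [CompleteSpace H₂]

lemma adjoint_diagL2 (A : H₁ →L[ℂ] H₁) (B : H₂ →L[ℂ] H₂) :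
    adjoint (diagL2 A B) = diagL2 (adjoint A) (adjoint B) :=
  ((eq_adjoint_iff _ _).2 fun x y => by simp [adjoint_inner_left]).symm

instance isStarNormal_diagL2 (A : H₁ →L[ℂ] H₁) (B : H₂ →L[ℂ] H₂) [IsStarNormal A]
    [IsStarNormal B] : IsStarNormal (diagL2 A B) where
  star_comm_self := by
    rw [commute_iff_eq, star_eq_adjoint, adjoint_diagL2, diagL2_mul, diagL2_mul,
      ← star_eq_adjoint, ← star_eq_adjoint, star_comm_self' A, star_comm_self' B]

theorem ContinuousLinearMap.fuglede_putnam {A : H₁ →L[ℂ] H₁} {B : H₂ →L[ℂ] H₂}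
    {S : H₁ →L[ℂ] H₂} [IsStarNormal A] [IsStarNormal B] (h : S ∘L A = B ∘L S) :
    S ∘L adjoint A = adjoint B ∘L S := by
  have hD : SemiconjBy (lowerL2 S) (diagL2 A B) (diagL2 A B) := by
    rw [SemiconjBy, lowerL2_mul_diagL2, diagL2_mul_lowerL2, h]
  have hD' := (hD.star_right inferInstance inferInstance).eq
  rw [star_eq_adjoint, adjoint_diagL2, lowerL2_mul_diagL2, diagL2_mul_lowerL2] at hD'
  exact lowerL2_injective hD'

end BlockOperators

namespace LocOpPair

variable {E F F' G : Type*} [NormedAddCommGroup E] [InnerProductSpace ℂ E]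
  [NormedAddCommGroup F] [InnerProductSpace ℂ F] [NormedAddCommGroup F'] [InnerProductSpace ℂ F']
  [NormedAddCommGroup G] [InnerProductSpace ℂ G]
  {Λ : Type*} {p : Λ → Submodule ℂ E} {q : Λ → Submodule ℂ F} {q' : Λ → Submodule ℂ F'}
  {r : Λ → Submodule ℂ G}
  [∀ l, CompleteSpace (p l)] [∀ l, CompleteSpace (q l)] [∀ l, CompleteSpace (q' l)]
  [∀ l, CompleteSpace (r l)]

lemma restr_comp_eq_iff (T₁ : LocOpPair q r) (T₂ : LocOpPair p q) (T₃ : LocOpPair q' r)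
    (T₄ : LocOpPair p q') (l : Λ) :
    T₁.restr l ∘L T₂.restr l = T₃.restr l ∘L T₄.restr l ↔
      ∀ x ∈ p l, T₁.toFun (T₂.toFun x) = T₃.toFun (T₄.toFun x) := by
  simp only [ContinuousLinearMap.ext_iff, Subtype.ext_iff, comp_apply, restr_eq, Subtype.forall]

lemma adjoint_restr (T : LocOpPair p q) (T' : LocOpPair q p)
    (h : ∀ x y, ⟪T.toFun x, y⟫_ℂ = ⟪x, T'.toFun y⟫_ℂ) (l : Λ) :
    adjoint (T.restr l) = T'.restr l := by
  rw [(eq_adjoint_iff (T.restr l) (T'.restr l)).2 fun x y => by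
    simp only [Submodule.coe_inner, restr_eq, h], adjoint_adjoint]

lemma isStarNormal_restr (N N' : LocOp p) (hadj : ∀ x y, ⟪N.toFun x, y⟫_ℂ = ⟪x, N'.toFun y⟫_ℂ)
    (hnormal : ∀ x, N.toFun (N'.toFun x) = N'.toFun (N.toFun x)) (l : Λ) :
    IsStarNormal (N.restr l) where
  star_comm_self := by
    rw [commute_iff_eq, star_eq_adjoint, N.adjoint_restr N' hadj]
    exact (N'.restr_comp_eq_iff N N N' l).2 fun x _ => (hnormal x).symm

end LocOpPair

theorem locOp_fuglede_putnam_general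
    {E F : Type*} [NormedAddCommGroup E] [InnerProductSpace ℂ E]
    [NormedAddCommGroup F] [InnerProductSpace ℂ F]
    {Λ : Type*}
    (p : Λ → Submodule ℂ E) (q : Λ → Submodule ℂ F)
    [∀ l, CompleteSpace (p l)] [∀ l, CompleteSpace (q l)]
    (hexhp : ∀ x : E, ∃ l, x ∈ p l)
    (N₁ N₁' : LocOp p) (N₂ N₂' : LocOp q) (S : LocOpPair p q)
    (hadj₁ : ∀ x y : E, ⟪N₁.toFun x, y⟫_ℂ = ⟪x, N₁'.toFun y⟫_ℂ)
    (hnormal₁ : ∀ x : E, N₁.toFun (N₁'.toFun x) = N₁'.toFun (N₁.toFun x))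
    (hadj₂ : ∀ x y : F, ⟪N₂.toFun x, y⟫_ℂ = ⟪x, N₂'.toFun y⟫_ℂ)
    (hnormal₂ : ∀ x : F, N₂.toFun (N₂'.toFun x) = N₂'.toFun (N₂.toFun x))
    (hS : ∀ x : E, S.toFun (N₁.toFun x) = N₂.toFun (S.toFun x)) :
    ∀ x : E, S.toFun (N₁'.toFun x) = N₂'.toFun (S.toFun x) := by
  intro x
  obtain ⟨l, hx⟩ := hexhp x
  have := N₁.isStarNormal_restr N₁' hadj₁ hnormal₁ l
  have := N₂.isStarNormal_restr N₂' hadj₂ hnormal₂ l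
  have key := ContinuousLinearMap.fuglede_putnam
    ((S.restr_comp_eq_iff N₁ N₂ S l).2 fun x _ => hS x)
  rw [N₁.adjoint_restr N₁' hadj₁, N₂.adjoint_restr N₂' hadj₂] at key
  exact (S.restr_comp_eq_iff N₁' N₂' S l).1 key x hx

/-- **Theorem 2.2 (v) (Fuglede–Putnam).**  Let `N₁ ∈ 𝓛(E)` be locally normal with adjoint
`N₁'`, let `N₂ ∈ 𝓛(F)` be locally normal with adjoint `N₂'`, and let `S ∈ 𝓛(E, F)` satisfy
`S ∘ N₁ = N₂ ∘ S`.  Then `S ∘ N₁' = N₂' ∘ S`. -/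
theorem locOp_fuglede_putnam
    {E F : Type*} [NormedAddCommGroup E] [InnerProductSpace ℂ E]
    [NormedAddCommGroup F] [InnerProductSpace ℂ F]
    {Λ : Type*} [PartialOrder Λ] [IsDirected Λ (· ≤ ·)]
    (p : Λ → Submodule ℂ E) (q : Λ → Submodule ℂ F)
    [∀ l, CompleteSpace (p l)] [∀ l, CompleteSpace (q l)]
    (hmonop : Monotone p) (hexhp : ∀ x : E, ∃ l, x ∈ p l)
    (hmonoq : Monotone q) (hexhq : ∀ y : F, ∃ l, y ∈ q l)
    (N₁ N₁' : LocOp p) (N₂ N₂' : LocOp q) (S : LocOpPair p q)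
    (hadj₁ : ∀ x y : E, ⟪N₁.toFun x, y⟫_ℂ = ⟪x, N₁'.toFun y⟫_ℂ)
    (hnormal₁ : ∀ x : E, N₁.toFun (N₁'.toFun x) = N₁'.toFun (N₁.toFun x))
    (hadj₂ : ∀ x y : F, ⟪N₂.toFun x, y⟫_ℂ = ⟪x, N₂'.toFun y⟫_ℂ)
    (hnormal₂ : ∀ x : F, N₂.toFun (N₂'.toFun x) = N₂'.toFun (N₂.toFun x))
    (hS : ∀ x : E, S.toFun (N₁.toFun x) = N₂.toFun (S.toFun x)) :
    ∀ x : E, S.toFun (N₁'.toFun x) = N₂'.toFun (S.toFun x) :=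
  locOp_fuglede_putnam_general p q hexhp N₁ N₁' N₂ N₂' S hadj₁ hnormal₁ hadj₂ hnormal₂ hS
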